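/- Let L > 0 be a real number, K ≥ 2 an integer, and N ≥ 1 an integer. Consider for any K-element subset C of the interval [0, L] the quantity m(C) := min over distinct pairs u, u' ∈ C of N · log₂ cosh((u − u')/2). Then the supremum of m(C) over all K-element subsets C of [0, L] equals N · log₂ cosh(L / (2(K − 1))), and it is attained by the K equally spaced points u_i = (i−1)·L/(K−1), i = 1, …, K. -/

import Mathlib

open scoped BigOperators

/-- The minimum pairwise (scaled) Bhattacharyya distance of a codebook
`C ⊆ [0, L]` in log-variance coordinates, with `N` receive antennas. -/
noncomputable def minPairwiseBhatt (N : ℕ) (C : Finset ℝ) : ℝ :=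
  sInf {d : ℝ | ∃ u ∈ C, ∃ u' ∈ C, u ≠ u' ∧
    d = (N : ℝ) * Real.logb 2 (Real.cosh ((u - u') / 2))}

lemma bhatt_nonneg (N : ℕ) (x : ℝ) : 0 ≤ (N : ℝ) * Real.logb 2 (Real.cosh x) := by
  have h := Real.logb_nonneg (b := 2) (by norm_num) (Real.one_le_cosh x)
  positivity

lemma bhatt_mono (N : ℕ) {x y : ℝ} (h : |x| ≤ |y|) :
    (N : ℝ) * Real.logb 2 (Real.cosh x) ≤ (N : ℝ) * Real.logb 2 (Real.cosh y) := by
  refine mul_le_mul_of_nonneg_left ?_ (Nat.cast_nonneg N)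
  exact Real.logb_le_logb_of_le (by norm_num) (Real.cosh_pos _) (Real.cosh_le_cosh.mpr h)

/-- Pigeonhole: a `K`-element subset of `[0, L]` contains two distinct points at
distance at most `L / (K - 1)`. -/
lemma exists_close_pair (L : ℝ) (hL : 0 < L) (K : ℕ) (hK : 2 ≤ K)
    (C : Finset ℝ) (hsub : (C : Set ℝ) ⊆ Set.Icc 0 L) (hcard : C.card = K) :
    ∃ u ∈ C, ∃ u' ∈ C, u ≠ u' ∧ |u - u'| ≤ L / ((K : ℝ) - 1) := by
  by_contra hcon
  push_neg at hcon
  have hkr : (0 : ℝ) < (K : ℝ) - 1 := by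
    have : (2 : ℝ) ≤ (K : ℝ) := by exact_mod_cast hK
    linarith
  set d : ℝ := L / ((K : ℝ) - 1) with hd
  have hd0 : 0 < d := div_pos hL hkr
  -- strictly monotone enumeration
  let e : Fin K ≃o C := C.orderIsoOfFin hcard
  have hKpos : 0 < K := by omega
  have hgap : ∀ i j : Fin K, i < j → (e i : ℝ) + d < (e j : ℝ) := by
    intro i j hij
    have hlt : (e i : ℝ) < (e j : ℝ) := by
      exact_mod_cast (e.lt_iff_lt.mpr hij)
    have hne : (e i : ℝ) ≠ (e j : ℝ) := ne_of_lt hlt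
    have := hcon (e i) (e i).2 (e j) (e j).2 hne
    rw [abs_sub_comm, abs_of_pos (by linarith)] at this
    linarith
  have claim : ∀ n : ℕ, ∀ h : n < K, (e ⟨0, hKpos⟩ : ℝ) + n * d ≤ (e ⟨n, h⟩ : ℝ) := by
    intro n
    induction n with
    | zero => intro h; simp
    | succ m ih =>
      intro h
      have hm : m < K := by omega
      have h1 := ih hm
      have h2 := hgap ⟨m, hm⟩ ⟨m + 1, h⟩ (by simp [Fin.lt_def])
      push_cast
      linarith
  have hlast : K - 1 < K := by omega
  have h1 := claim (K - 1) hlast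
  have hcast : ((K - 1 : ℕ) : ℝ) = (K : ℝ) - 1 := by
    have : (1 : ℕ) ≤ K := by omega
    push_cast [this]; ring
  have hmul : ((K - 1 : ℕ) : ℝ) * d = L := by
    rw [hcast, hd]; field_simp
  have h0mem := hsub (e ⟨0, hKpos⟩).2
  have hlmem := hsub (e ⟨K - 1, hlast⟩).2
  have := h0mem.1
  have := hlmem.2
  -- e 0 + L ≤ e last ≤ L, e 0 ≥ 0
  have hstrict : (e ⟨0, hKpos⟩ : ℝ) < (e ⟨K - 1, hlast⟩ : ℝ) + 0 := by
    -- we need strictness somewhere; use gap from 0 to 1 combined with claim from 1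
    linarith [hmul, h1, h0mem.1, hlmem.2, hd0]
  -- derive contradiction: e0 + L ≤ e_last ≤ L and 0 ≤ e0 gives e0 = 0, e_last = L, but
  have hstrictclaim : ∀ n : ℕ, ∀ h : n < K, 1 ≤ n →
      (e ⟨0, hKpos⟩ : ℝ) + n * d < (e ⟨n, h⟩ : ℝ) := by
    intro n
    induction n with
    | zero => omega
    | succ m ih =>
      intro h _
      have hm : m < K := by omega
      have h1 := claim m hm
      have h2 := hgap ⟨m, hm⟩ ⟨m + 1, h⟩ (by simp [Fin.lt_def])
      push_cast
      linarith
  have hK1 : 1 ≤ K - 1 := by omega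
  have h2 := hstrictclaim (K - 1) hlast hK1
  rw [hmul] at h2
  linarith [h0mem.1, hlmem.2]

/-- Exact diversity frontier for the scale-family channel: among all `K`-element
subsets of `[0, L]`, the largest achievable minimum pairwise distance
`min_{u ≠ u'} N·log₂ cosh((u−u')/2)` equals `N·log₂ cosh(L/(2(K−1)))`, and it is
attained by the `K` equally spaced points `u_i = (i−1)·L/(K−1)`. -/
theorem stmt_0 (L : ℝ) (hL : 0 < L) (K N : ℕ) (hK : 2 ≤ K) (hN : 1 ≤ N) :
    IsGreatest
      {m : ℝ | ∃ C : Finset ℝ, (C : Set ℝ) ⊆ Set.Icc 0 L ∧ C.card = K ∧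
        m = minPairwiseBhatt N C}
      ((N : ℝ) * Real.logb 2 (Real.cosh (L / (2 * ((K : ℝ) - 1)))))
    ∧
    minPairwiseBhatt N
        ((Finset.range K).image (fun i : ℕ => (i : ℝ) * L / ((K : ℝ) - 1)))
      = (N : ℝ) * Real.logb 2 (Real.cosh (L / (2 * ((K : ℝ) - 1)))) := by
  have hkr : (0 : ℝ) < (K : ℝ) - 1 := by
    have : (2 : ℝ) ≤ (K : ℝ) := by exact_mod_cast hK
    linarith
  set d : ℝ := L / ((K : ℝ) - 1) with hd
  have hd0 : 0 < d := div_pos hL hkr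
  set g : ℝ := (N : ℝ) * Real.logb 2 (Real.cosh (L / (2 * ((K : ℝ) - 1)))) with hg
  have hdhalf : L / (2 * ((K : ℝ) - 1)) = d / 2 := by
    rw [hd, div_div, mul_comm]
  set C₀ : Finset ℝ := (Finset.range K).image (fun i : ℕ => (i : ℝ) * L / ((K : ℝ) - 1))
    with hC₀
  -- the distance set of any C is bounded below by 0
  have hbdd : ∀ C : Finset ℝ, BddBelow {x : ℝ | ∃ u ∈ C, ∃ u' ∈ C, u ≠ u' ∧
      x = (N : ℝ) * Real.logb 2 (Real.cosh ((u - u') / 2))} := by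
    intro C
    refine ⟨0, ?_⟩
    rintro x ⟨u, _, u', _, _, rfl⟩
    exact bhatt_nonneg N _
  -- key equality for C₀
  have hC₀eq : minPairwiseBhatt N C₀ = g := by
    have hmemfun : ∀ i : ℕ, i < K → (i : ℝ) * L / ((K : ℝ) - 1) ∈ C₀ := by
      intro i hi
      exact Finset.mem_image.mpr ⟨i, Finset.mem_range.mpr hi, rfl⟩
    apply le_antisymm
    · -- sInf ≤ g : take points 0 and d
      have h0 : (0 : ℝ) ∈ C₀ := by
        have := hmemfun 0 (by omega); simpa using this
      have h1 : d ∈ C₀ := by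
        have := hmemfun 1 (by omega)
        simpa [hd] using this
      have hx : g ∈ {x : ℝ | ∃ u ∈ C₀, ∃ u' ∈ C₀, u ≠ u' ∧
          x = (N : ℝ) * Real.logb 2 (Real.cosh ((u - u') / 2))} := by
        refine ⟨0, h0, d, h1, ne_of_lt hd0, ?_⟩
        rw [hg, hdhalf]
        have : ((0 : ℝ) - d) / 2 = -(d / 2) := by ring
        rw [this, Real.cosh_neg]
      exact csInf_le (hbdd C₀) hx
    · -- g ≤ sInf : every pair is at distance ≥ d
      apply le_csInf
      · refine ⟨g, 0, ?_, d, ?_, ?_, ?_⟩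
        · have := hmemfun 0 (by omega); simpa using this
        · have := hmemfun 1 (by omega); simpa [hd] using this
        · exact ne_of_lt hd0
        · rw [hg, hdhalf]
          have : ((0 : ℝ) - d) / 2 = -(d / 2) := by ring
          rw [this, Real.cosh_neg]
      · rintro x ⟨u, hu, u', hu', hne, rfl⟩
        obtain ⟨i, hi, rfl⟩ := Finset.mem_image.mp hu
        obtain ⟨j, hj, rfl⟩ := Finset.mem_image.mp hu'
        have hij : (i : ℝ) ≠ (j : ℝ) := by
          intro h
          apply hne
          rw [h]
        have hijn : i ≠ j := fun h => hij (by rw [h])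
        have habs : d ≤ |(i : ℝ) * L / ((K : ℝ) - 1) - (j : ℝ) * L / ((K : ℝ) - 1)| := by
          have : (i : ℝ) * L / ((K : ℝ) - 1) - (j : ℝ) * L / ((K : ℝ) - 1)
              = ((i : ℝ) - (j : ℝ)) * d := by rw [hd]; ring
          rw [this, abs_mul, abs_of_pos hd0]
          have hz : (1 : ℤ) ≤ |(i : ℤ) - (j : ℤ)| := by
            rcases lt_or_gt_of_ne hijn with h | h
            · rw [abs_sub_comm, abs_of_pos (by omega)]; omega
            · rw [abs_of_pos (by omega)]; omega
          have h1 : (1 : ℝ) ≤ |(i : ℝ) - (j : ℝ)| := by exact_mod_cast hz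
          nlinarith [abs_nonneg ((i : ℝ) - (j : ℝ))]
        rw [hg, hdhalf]
        apply bhatt_mono
        have e1 : |d / 2| = d / 2 := abs_of_pos (by linarith)
        have e2 : |((i : ℝ) * L / ((K : ℝ) - 1) - (j : ℝ) * L / ((K : ℝ) - 1)) / 2|
            = |(i : ℝ) * L / ((K : ℝ) - 1) - (j : ℝ) * L / ((K : ℝ) - 1)| / 2 := by
          rw [abs_div]; norm_num
        rw [e1, e2]
        linarith [habs]
  refine ⟨⟨⟨C₀, ?_, ?_, hC₀eq.symm⟩, ?_⟩, hC₀eq⟩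
  · -- C₀ ⊆ Icc 0 L
    intro x hx
    simp only [hC₀, Finset.coe_image, Set.mem_image, Finset.mem_coe, Finset.mem_range] at hx
    obtain ⟨i, hi, rfl⟩ := hx
    have hi' : (i : ℝ) ≤ (K : ℝ) - 1 := by
      have : (i : ℝ) ≤ (K : ℝ) - 1 := by
        have : i ≤ K - 1 := by omega
        have h3 : ((i : ℕ) : ℝ) ≤ ((K - 1 : ℕ) : ℝ) := by exact_mod_cast this
        have h4 : ((K - 1 : ℕ) : ℝ) = (K : ℝ) - 1 := by
          have : (1 : ℕ) ≤ K := by omega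
          push_cast [this]; ring
        linarith [h3, h4.le]
      exact this
    constructor
    · positivity
    · rw [div_le_iff₀ hkr]
      nlinarith
  · -- card C₀ = K
    rw [hC₀, Finset.card_image_of_injective _ ?_, Finset.card_range]
    intro a b hab
    exact_mod_cast mul_right_cancel₀ hL.ne' ((div_left_inj' hkr.ne').mp hab)
  · -- upper bound over all C
    rintro m ⟨C, hsub, hcard, rfl⟩
    obtain ⟨u, hu, u', hu', hne, hclose⟩ := exists_close_pair L hL K hK C hsub hcard
    have hx : (N : ℝ) * Real.logb 2 (Real.cosh ((u - u') / 2)) ∈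
        {x : ℝ | ∃ a ∈ C, ∃ b ∈ C, a ≠ b ∧
          x = (N : ℝ) * Real.logb 2 (Real.cosh ((a - b) / 2))} :=
      ⟨u, hu, u', hu', hne, rfl⟩
    have hle := csInf_le (hbdd C) hx
    refine hle.trans ?_
    rw [hg, hdhalf]
    apply bhatt_mono
    have e1 : |(u - u') / 2| = |u - u'| / 2 := by rw [abs_div]; norm_num
    have e2 : |d / 2| = d / 2 := abs_of_pos (by linarith)
    rw [e1, e2]
    have hud : |u - u'| ≤ d := hclose
    linarith
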